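/- Under assumptions (A1), (A3) and (A4), with C = 1 − L_{x,y}/min(σ_x, σ_y), for every r > 0, every integer k ≥ 0, and every (x, y) ∈ 𝒳 × 𝒴 with ‖x − x*‖_x + ‖y − y*‖_y ≥ 2^k·r, the quadratic penalty on the annulus is bounded below: (σ_y/8)·‖y − y*(x)‖_y² + (σ_x/8)·‖x − x*(y)‖_x² ≥ min(σ_x, σ_y)·C²·4^{k−2}·r². -/

import Mathlib

open MeasureTheory Real Set

noncomputable section

/-- We identify `ℝ^d` with the Euclidean space on `Fin d`. -/
abbrev Ed (d : ℕ) := EuclideanSpace ℝ (Fin d)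

/-- `N` is a norm on `ℝ^d` (possibly different from the Euclidean one). -/
structure IsNormFn {d : ℕ} (N : Ed d → ℝ) : Prop where
  nonneg : ∀ v, 0 ≤ N v
  triangle : ∀ v w, N (v + w) ≤ N v + N w
  smul_eq : ∀ (c : ℝ) (v : Ed d), N (c • v) = |c| * N v
  eq_zero : ∀ v, N v = 0 → v = 0

/-- The dual norm of `N`, via the Euclidean inner product pairing. -/
def dualN {d : ℕ} (N : Ed d → ℝ) (v : Ed d) : ℝ :=
  sSup {r | ∃ u : Ed d, N u ≤ 1 ∧ r = |(inner ℝ u v : ℝ)|}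

/-- `f` is `σ`-strongly convex on `s` w.r.t. the norm `N`. -/
def SCvxOn {d : ℕ} (N : Ed d → ℝ) (σ : ℝ) (s : Set (Ed d)) (f : Ed d → ℝ) : Prop :=
  ∀ x ∈ s, ∀ x' ∈ s, ∀ α : ℝ, 0 ≤ α → α ≤ 1 →
    f (α • x + (1 - α) • x') ≤
      α * f x + (1 - α) * f x' - σ * α * (1 - α) / 2 * N (x - x') ^ 2

/-- `f` is `σ`-strongly concave on `s` w.r.t. the norm `N`. -/
def SCcvOn {d : ℕ} (N : Ed d → ℝ) (σ : ℝ) (s : Set (Ed d)) (f : Ed d → ℝ) : Prop :=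
  ∀ y ∈ s, ∀ y' ∈ s, ∀ α : ℝ, 0 ≤ α → α ≤ 1 →
    α * f y + (1 - α) * f y' + σ * α * (1 - α) / 2 * N (y - y') ^ 2 ≤
      f (α • y + (1 - α) • y')

/-- `f` is `L`-Lipschitz on `s` w.r.t. the norm `N`. -/
def LipOn {d : ℕ} (N : Ed d → ℝ) (L : ℝ) (s : Set (Ed d)) (f : Ed d → ℝ) : Prop :=
  ∀ x ∈ s, ∀ x' ∈ s, |f x - f x'| ≤ L * N (x - x')

/-- `(x0, y0)` is a saddle point of `H` on `𝒳 × 𝒴`. -/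
def IsSaddleOn {d : ℕ} (𝒳 𝒴 : Set (Ed d)) (H : Ed d → Ed d → ℝ) (x0 y0 : Ed d) : Prop :=
  x0 ∈ 𝒳 ∧ y0 ∈ 𝒴 ∧ ∀ x ∈ 𝒳, ∀ y ∈ 𝒴, H x0 y ≤ H x0 y0 ∧ H x0 y0 ≤ H x y0

/-- `x0` minimizes `f` over `𝒳`. -/
def IsArgminOn' {d : ℕ} (𝒳 : Set (Ed d)) (f : Ed d → ℝ) (x0 : Ed d) : Prop :=
  x0 ∈ 𝒳 ∧ ∀ x ∈ 𝒳, f x0 ≤ f x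

/-- `y0` maximizes `f` over `𝒴`. -/
def IsArgmaxOn' {d : ℕ} (𝒴 : Set (Ed d)) (f : Ed d → ℝ) (y0 : Ed d) : Prop :=
  y0 ∈ 𝒴 ∧ ∀ y ∈ 𝒴, f y ≤ f y0

/-!
Quadratic growth of a strongly convex function around its minimizer, together with the mean value
inequality for `F(·, y) - F(·, y')`, shows that minimizers move Lipschitz-continuously:
`‖x*(y) - x*(y')‖ₓ ≤ (L/σₓ) ‖y - y'‖_y`, and symmetrically for `y*`. Since the saddle point itself
minimizes `F(·, y*)` and maximizes `F(x*, ·)`, the triangle inequality gives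
`(1 - L/min σ) (‖x - x*‖ₓ + ‖y - y*‖_y) ≤ ‖x - x*(y)‖ₓ + ‖y - y*(x)‖_y`;
squaring and `(a + b)² ≤ 2 (a² + b²)` give the bound.
-/

open Filter Topology

namespace IsNormFn

variable {d : ℕ} {N : Ed d → ℝ}

lemma map_zero (hN : IsNormFn N) : N 0 = 0 := by
  simpa using hN.smul_eq 0 0

lemma map_neg (hN : IsNormFn N) (v : Ed d) : N (-v) = N v := by
  simpa using hN.smul_eq (-1) v

lemma sub_comm (hN : IsNormFn N) (a b : Ed d) : N (a - b) = N (b - a) := by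
  rw [← neg_sub, hN.map_neg]

lemma sub_le_sub_add_sub (hN : IsNormFn N) (a b c : Ed d) :
    N (a - c) ≤ N (a - b) + N (b - c) := by
  simpa using hN.triangle (a - b) (b - c)

lemma convexOn (hN : IsNormFn N) : ConvexOn ℝ univ N := by
  refine ⟨convex_univ, fun v _ w _ a b ha hb _ => ?_⟩
  calc N (a • v + b • w) ≤ N (a • v) + N (b • w) := hN.triangle _ _
    _ = a • N v + b • N w := by
      rw [hN.smul_eq, hN.smul_eq, abs_of_nonneg ha, abs_of_nonneg hb, smul_eq_mul, smul_eq_mul]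

lemma continuous (hN : IsNormFn N) : Continuous N :=
  hN.convexOn.locallyLipschitz.continuous

/-- `c` is the minimum of `N` on the Euclidean unit sphere. -/
lemma exists_pos_mul_norm_le (hN : IsNormFn N) : ∃ c > 0, ∀ v, c * ‖v‖ ≤ N v := by
  have hsphere : ∀ v : Ed d, v ≠ 0 → ‖v‖⁻¹ • v ∈ Metric.sphere (0 : Ed d) 1 := fun v hv => by
    rw [mem_sphere_zero_iff_norm, norm_smul, norm_inv, norm_norm, inv_mul_cancel₀ (norm_ne_zero_iff.mpr hv)]
  by_cases hne : (Metric.sphere (0 : Ed d) 1).Nonempty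
  · obtain ⟨w, hw, hwmin⟩ :=
      (isCompact_sphere (0 : Ed d) 1).exists_isMinOn hne hN.continuous.continuousOn
    have hw0 : w ≠ 0 := ne_zero_of_mem_unit_sphere ⟨w, hw⟩
    have hpos : 0 < N w := (hN.nonneg w).lt_of_ne fun h => hw0 (hN.eq_zero w h.symm)
    refine ⟨N w, hpos, fun v => ?_⟩
    rcases eq_or_ne v 0 with rfl | hv
    · simp [hN.map_zero]
    have hle : N w ≤ ‖v‖⁻¹ * N v := by
      simpa [hN.smul_eq] using hwmin (hsphere v hv)
    have hnv : 0 < ‖v‖ := norm_pos_iff.mpr hv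
    calc N w * ‖v‖ ≤ ‖v‖⁻¹ * N v * ‖v‖ := by gcongr
      _ = N v := by field_simp
  · refine ⟨1, one_pos, fun v => ?_⟩
    obtain rfl : v = 0 := by_contra fun hv => hne ⟨_, hsphere v hv⟩
    simp [hN.map_zero]

lemma bddAbove_abs_inner (hN : IsNormFn N) (v : Ed d) :
    BddAbove {r | ∃ u : Ed d, N u ≤ 1 ∧ r = |(inner ℝ u v : ℝ)|} := by
  obtain ⟨c, hc, hcN⟩ := hN.exists_pos_mul_norm_le
  refine ⟨‖v‖ / c, fun r ⟨u, hu, hr⟩ => ?_⟩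
  have hu' : ‖u‖ ≤ 1 / c := by
    rw [le_div_iff₀ hc, mul_comm]
    exact (hcN u).trans hu
  calc r ≤ ‖u‖ * ‖v‖ := hr ▸ abs_real_inner_le_norm u v
    _ ≤ 1 / c * ‖v‖ := by gcongr
    _ = ‖v‖ / c := by ring

lemma abs_inner_le_dualN_mul (hN : IsNormFn N) (v w : Ed d) :
    |(inner ℝ w v : ℝ)| ≤ dualN N v * N w := by
  rcases (hN.nonneg w).eq_or_lt with h | h
  · simp [hN.eq_zero w h.symm, hN.map_zero]
  have hunit : N ((N w)⁻¹ • w) ≤ 1 := by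
    rw [hN.smul_eq, abs_of_pos (inv_pos.mpr h), inv_mul_cancel₀ h.ne']
  have hle : (N w)⁻¹ * |(inner ℝ w v : ℝ)| ≤ dualN N v := by
    refine le_csSup (hN.bddAbove_abs_inner v) ⟨_, hunit, ?_⟩
    rw [real_inner_smul_left, abs_mul, abs_of_pos (inv_pos.mpr h)]
  rwa [inv_mul_le_iff₀ h, mul_comm] at hle

end IsNormFn

lemma dualN_nonneg {d : ℕ} (N : Ed d → ℝ) (v : Ed d) : 0 ≤ dualN N v :=
  Real.sSup_nonneg fun _ ⟨_, _, hr⟩ => hr ▸ abs_nonneg _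

section Optimality

variable {d : ℕ} {N : Ed d → ℝ} {σ M : ℝ} {s : Set (Ed d)} {f f' : Ed d → ℝ}

/-- Mean value inequality for `f - f'` along the segment `[u, u']`. -/
lemma abs_sub_sub_le_of_dualN_gradient_sub_le (hN : IsNormFn N) (hs : Convex ℝ s)
    (hf : Differentiable ℝ f) (hf' : Differentiable ℝ f')
    (hM : ∀ z ∈ s, dualN N (gradient f z - gradient f' z) ≤ M)
    {u u' : Ed d} (hu : u ∈ s) (hu' : u' ∈ s) :
    |(f u' - f' u') - (f u - f' u)| ≤ M * N (u' - u) := by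
  set γ := AffineMap.lineMap (k := ℝ) u u'
  have hderiv : ∀ t : ℝ, HasDerivAt (fun t => f (γ t) - f' (γ t))
      (fderiv ℝ f (γ t) (u' - u) - fderiv ℝ f' (γ t) (u' - u)) t := fun t =>
    ((hf (γ t)).hasFDerivAt.sub (hf' (γ t)).hasFDerivAt).comp_hasDerivAt t
      AffineMap.hasDerivAt_lineMap
  have hbound : ∀ t ∈ Ico (0 : ℝ) 1,
      ‖fderiv ℝ f (γ t) (u' - u) - fderiv ℝ f' (γ t) (u' - u)‖ ≤ M * N (u' - u) := by
    intro t ht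
    rw [Real.norm_eq_abs, ← inner_gradient_left, ← inner_gradient_left, ← inner_sub_left,
      real_inner_comm]
    exact (hN.abs_inner_le_dualN_mul _ _).trans <| mul_le_mul_of_nonneg_right
      (hM _ (hs.lineMap_mem hu hu' (Ico_subset_Icc_self ht))) (hN.nonneg _)
  simpa [γ] using norm_image_sub_le_of_norm_deriv_le_segment_01'
    (fun t _ => (hderiv t).hasDerivWithinAt) hbound

lemma SCvxOn.add_sq_le_of_isArgminOn' (hs : Convex ℝ s) (hf : SCvxOn N σ s f) {x₀ : Ed d}
    (hx₀ : IsArgminOn' s f x₀) {x : Ed d} (hx : x ∈ s) :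
    f x₀ + σ / 2 * N (x₀ - x) ^ 2 ≤ f x := by
  have key : ∀ α ∈ Ioo (0 : ℝ) 1, α * (σ / 2 * N (x₀ - x) ^ 2) ≤ f x - f x₀ := by
    rintro α ⟨hα0, hα1⟩
    have hmin := hx₀.2 _ (hs hx₀.1 hx hα0.le (sub_nonneg.2 hα1.le) (add_sub_cancel α 1))
    have hcvx := hf x₀ hx₀.1 x hx α hα0.le hα1.le
    have : (1 - α) * (α * (σ / 2 * N (x₀ - x) ^ 2)) ≤ (1 - α) * (f x - f x₀) := by nlinarith
    exact le_of_mul_le_mul_left this (by linarith)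
  have hlim : Tendsto (fun α : ℝ => α * (σ / 2 * N (x₀ - x) ^ 2)) (𝓝[<] 1)
      (𝓝 (1 * (σ / 2 * N (x₀ - x) ^ 2))) :=
    ((continuous_id.mul continuous_const).tendsto 1).mono_left nhdsWithin_le_nhds
  have := le_of_tendsto hlim (eventually_of_mem (Ioo_mem_nhdsLT one_pos) key)
  linarith

lemma SCcvOn.le_sub_sq_of_isArgmaxOn' (hs : Convex ℝ s) (hf : SCcvOn N σ s f) {y₀ : Ed d}
    (hy₀ : IsArgmaxOn' s f y₀) {y : Ed d} (hy : y ∈ s) :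
    f y + σ / 2 * N (y₀ - y) ^ 2 ≤ f y₀ := by
  have hneg : SCvxOn N σ s (fun z => -f z) := fun a ha b hb α h0 h1 => by
    linarith [hf a ha b hb α h0 h1]
  have := hneg.add_sq_le_of_isArgminOn' hs ⟨hy₀.1, fun z hz => neg_le_neg (hy₀.2 z hz)⟩ hy
  linarith

lemma le_div_of_mul_sq_le_mul {σ M t : ℝ} (hσ : 0 < σ) (hM : 0 ≤ M) (ht : 0 ≤ t)
    (h : σ * t ^ 2 ≤ M * t) : t ≤ M / σ := by
  rw [le_div_iff₀ hσ]
  rcases ht.eq_or_lt with rfl | ht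
  · simpa using hM
  · nlinarith

lemma IsArgminOn'.dist_le (hN : IsNormFn N) (hs : Convex ℝ s) (hσ : 0 < σ)
    (hf : Differentiable ℝ f) (hf' : Differentiable ℝ f')
    (hfc : SCvxOn N σ s f) (hfc' : SCvxOn N σ s f')
    (hM : ∀ z ∈ s, dualN N (gradient f z - gradient f' z) ≤ M)
    {u u' : Ed d} (hu : IsArgminOn' s f u) (hu' : IsArgminOn' s f' u') :
    N (u - u') ≤ M / σ := by
  have h₁ := hfc.add_sq_le_of_isArgminOn' hs hu hu'.1
  have h₂ := hfc'.add_sq_le_of_isArgminOn' hs hu' hu.1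
  have h₃ := abs_le.mp (abs_sub_sub_le_of_dualN_gradient_sub_le hN hs hf hf' hM hu.1 hu'.1)
  rw [hN.sub_comm u' u] at h₂ h₃
  exact le_div_of_mul_sq_le_mul hσ ((dualN_nonneg N _).trans (hM u hu.1)) (hN.nonneg _)
    (by linarith)

lemma IsArgmaxOn'.dist_le (hN : IsNormFn N) (hs : Convex ℝ s) (hσ : 0 < σ)
    (hf : Differentiable ℝ f) (hf' : Differentiable ℝ f')
    (hfc : SCcvOn N σ s f) (hfc' : SCcvOn N σ s f')
    (hM : ∀ z ∈ s, dualN N (gradient f z - gradient f' z) ≤ M)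
    {u u' : Ed d} (hu : IsArgmaxOn' s f u) (hu' : IsArgmaxOn' s f' u') :
    N (u - u') ≤ M / σ := by
  have h₁ := hfc.le_sub_sq_of_isArgmaxOn' hs hu hu'.1
  have h₂ := hfc'.le_sub_sq_of_isArgmaxOn' hs hu' hu.1
  have h₃ := abs_le.mp (abs_sub_sub_le_of_dualN_gradient_sub_le hN hs hf hf' hM hu.1 hu'.1)
  rw [hN.sub_comm u' u] at h₂ h₃
  exact le_div_of_mul_sq_le_mul hσ ((dualN_nonneg N _).trans (hM u hu.1)) (hN.nonneg _)
    (by linarith)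

end Optimality

lemma one_sub_div_min_mul_add_le {σx σy L p q a b : ℝ} (hσx : 0 < σx) (hσy : 0 < σy)
    (hLp : 0 ≤ L * p) (hLq : 0 ≤ L * q)
    (hp : p ≤ a + L * q / σx) (hq : q ≤ b + L * p / σy) :
    (1 - L / min σx σy) * (p + q) ≤ a + b := by
  have hm : 0 < min σx σy := lt_min hσx hσy
  have hqx : L * q / σx ≤ L * q / min σx σy := div_le_div_of_nonneg_left hLq hm (min_le_left _ _)
  have hpy : L * p / σy ≤ L * p / min σx σy := div_le_div_of_nonneg_left hLp hm (min_le_right _ _)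
  have hexpand : (1 - L / min σx σy) * (p + q) = p + q - L * q / min σx σy - L * p / min σx σy := by
    ring
  linarith

theorem annulus_penalty_lower_bound_general {d : ℕ} (F : Ed d → Ed d → ℝ)
    (𝒳 𝒴 : Set (Ed d))
    (hXcvx : Convex ℝ 𝒳)
    (hYcvx : Convex ℝ 𝒴)
    (nx ny : Ed d → ℝ) (hnx : IsNormFn nx) (hny : IsNormFn ny)
    (σx σy Lxy : ℝ) (hσx : 0 < σx) (hσy : 0 < σy)
    (hdiffx : ∀ y, Differentiable ℝ fun x => F x y)
    (hdiffy : ∀ x, Differentiable ℝ fun y => F x y)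
    (hA1x : ∀ y ∈ 𝒴, SCvxOn nx σx 𝒳 fun x => F x y)
    (hA1y : ∀ x ∈ 𝒳, SCcvOn ny σy 𝒴 fun y => F x y)
    (hA3x : ∀ x ∈ 𝒳, ∀ y ∈ 𝒴, ∀ y' ∈ 𝒴,
      dualN nx (gradient (fun x' => F x' y) x - gradient (fun x' => F x' y') x)
        ≤ Lxy * ny (y - y'))
    (hA3y : ∀ y ∈ 𝒴, ∀ x ∈ 𝒳, ∀ x' ∈ 𝒳,
      dualN ny (gradient (fun y' => F x y') y - gradient (fun y' => F x' y') y)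
        ≤ Lxy * nx (x - x'))
    (xstar ystar : Ed d → Ed d)
    (hxstar : ∀ y ∈ 𝒴, IsArgminOn' 𝒳 (fun x => F x y) (xstar y))
    (hystar : ∀ x ∈ 𝒳, IsArgmaxOn' 𝒴 (fun y => F x y) (ystar x))
    (hA4 : Lxy ≤ min σx σy)
    (xs ys : Ed d) (hsaddle : IsSaddleOn 𝒳 𝒴 F xs ys) :
    ∀ r : ℝ, 0 < r → ∀ k : ℕ, ∀ x ∈ 𝒳, ∀ y ∈ 𝒴,
      (2 : ℝ) ^ k * r ≤ nx (x - xs) + ny (y - ys) →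
      min σx σy * (1 - Lxy / min σx σy) ^ 2 * (4 : ℝ) ^ ((k : ℤ) - 2) * r ^ 2 ≤
        σy / 8 * ny (y - ystar x) ^ 2 + σx / 8 * nx (x - xstar y) ^ 2 := by
  intro r hr k x hx y hy hann
  obtain ⟨hxs, hys, hsaddle⟩ := hsaddle
  have hx_near : nx (xstar y - xs) ≤ Lxy * ny (y - ys) / σx :=
    (hxstar y hy).dist_le hnx hXcvx hσx (hdiffx y) (hdiffx ys) (hA1x y hy) (hA1x ys hys)
      (fun z hz => hA3x z hz y hy ys hys) ⟨hxs, fun x' hx' => (hsaddle x' hx' ys hys).2⟩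
  have hy_near : ny (ystar x - ys) ≤ Lxy * nx (x - xs) / σy :=
    (hystar x hx).dist_le hny hYcvx hσy (hdiffy x) (hdiffy xs) (hA1y x hx) (hA1y xs hxs)
      (fun z hz => hA3y z hz x hx xs hxs) ⟨hys, fun y' hy' => (hsaddle xs hxs y' hy').1⟩
  have hC : 0 ≤ 1 - Lxy / min σx σy := sub_nonneg.2 ((div_le_one (lt_min hσx hσy)).2 hA4)
  have hsum : (1 - Lxy / min σx σy) * ((2 : ℝ) ^ k * r) ≤ nx (x - xstar y) + ny (y - ystar x) :=
    (mul_le_mul_of_nonneg_left hann hC).trans <| one_sub_div_min_mul_add_le hσx hσy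
      ((dualN_nonneg ny _).trans (hA3y y hy x hx xs hxs))
      ((dualN_nonneg nx _).trans (hA3x x hx y hy ys hys))
      (by linarith [hnx.sub_le_sub_add_sub x (xstar y) xs])
      (by linarith [hny.sub_le_sub_add_sub y (ystar x) ys])
  have h4 : (4 : ℝ) ^ ((k : ℤ) - 2) = ((2 : ℝ) ^ k) ^ 2 / 16 := by
    rw [zpow_sub₀ four_ne_zero, zpow_natCast, ← pow_mul, mul_comm, pow_mul]
    norm_num
  calc min σx σy * (1 - Lxy / min σx σy) ^ 2 * (4 : ℝ) ^ ((k : ℤ) - 2) * r ^ 2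
      = min σx σy * ((1 - Lxy / min σx σy) * ((2 : ℝ) ^ k * r)) ^ 2 / 16 := by rw [h4]; ring
    _ ≤ min σx σy * (nx (x - xstar y) + ny (y - ystar x)) ^ 2 / 16 := by
      gcongr
    _ ≤ σy / 8 * ny (y - ystar x) ^ 2 + σx / 8 * nx (x - xstar y) ^ 2 := by
      nlinarith [min_le_left σx σy, min_le_right σx σy, lt_min hσx hσy,
        sq_nonneg (nx (x - xstar y) - ny (y - ystar x)), sq_nonneg (nx (x - xstar y)),
        sq_nonneg (ny (y - ystar x))]

/-- Lower bound for the quadratic penalty on the annulus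
`‖x − x*‖ₓ + ‖y − y*‖_y ≥ 2^k r`. -/
theorem annulus_penalty_lower_bound {d : ℕ} (F : Ed d → Ed d → ℝ)
    (𝒳 𝒴 : Set (Ed d))
    (hXcvx : Convex ℝ 𝒳) (hXcpt : IsCompact 𝒳) (hXne : 𝒳.Nonempty)
    (hYcvx : Convex ℝ 𝒴) (hYcpt : IsCompact 𝒴) (hYne : 𝒴.Nonempty)
    (nx ny : Ed d → ℝ) (hnx : IsNormFn nx) (hny : IsNormFn ny)
    (σx σy Lxy : ℝ) (hσx : 0 < σx) (hσy : 0 < σy)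
    (hdiffx : ∀ y, Differentiable ℝ fun x => F x y)
    (hdiffy : ∀ x, Differentiable ℝ fun y => F x y)
    (hA1x : ∀ y ∈ 𝒴, SCvxOn nx σx 𝒳 fun x => F x y)
    (hA1y : ∀ x ∈ 𝒳, SCcvOn ny σy 𝒴 fun y => F x y)
    (hA3x : ∀ x ∈ 𝒳, ∀ y ∈ 𝒴, ∀ y' ∈ 𝒴,
      dualN nx (gradient (fun x' => F x' y) x - gradient (fun x' => F x' y') x)
        ≤ Lxy * ny (y - y'))
    (hA3y : ∀ y ∈ 𝒴, ∀ x ∈ 𝒳, ∀ x' ∈ 𝒳,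
      dualN ny (gradient (fun y' => F x y') y - gradient (fun y' => F x' y') y)
        ≤ Lxy * nx (x - x'))
    (xstar ystar : Ed d → Ed d)
    (hxstar : ∀ y ∈ 𝒴, IsArgminOn' 𝒳 (fun x => F x y) (xstar y))
    (hystar : ∀ x ∈ 𝒳, IsArgmaxOn' 𝒴 (fun y => F x y) (ystar x))
    (hA4 : Lxy ≤ min σx σy)
    (xs ys : Ed d) (hsaddle : IsSaddleOn 𝒳 𝒴 F xs ys) :
    ∀ r : ℝ, 0 < r → ∀ k : ℕ, ∀ x ∈ 𝒳, ∀ y ∈ 𝒴,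
      (2 : ℝ) ^ k * r ≤ nx (x - xs) + ny (y - ys) →
      min σx σy * (1 - Lxy / min σx σy) ^ 2 * (4 : ℝ) ^ ((k : ℤ) - 2) * r ^ 2 ≤
        σy / 8 * ny (y - ystar x) ^ 2 + σx / 8 * nx (x - xstar y) ^ 2 :=
  annulus_penalty_lower_bound_general F 𝒳 𝒴 hXcvx hYcvx nx ny hnx hny σx σy Lxy hσx hσy hdiffx
    hdiffy hA1x hA1y hA3x hA3y xstar ystar hxstar hystar hA4 xs ys hsaddle
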